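/- arXiv:1601.00777 — 5 statements merged into one kernel-verified Lean document; each statement's English description precedes it below -/
import Mathlib

section
/- Let R be a subring of ℂ that is closed under complex conjugation and contains 1. If R has essentially unique partitions of the unit, then R is kind, i.e., whenever λ₀, λ₁, …, λₙ ∈ R satisfy λ₀ = Σᵢ₌₀ⁿ |λᵢ|², then λ₁ = ⋯ = λₙ = 0. -/
/-- A subring `R` of `ℂ` is *kind* if whenever `λ₀, λ₁, …, λₙ ∈ R` satisfy
`λ₀ = ∑ᵢ₌₀ⁿ |λᵢ|²`, then `λ₁ = ⋯ = λₙ = 0`. -/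
def IsKind (R : Subring ℂ) : Prop :=
  ∀ (n : ℕ) (l : Fin (n + 1) → ℂ), (∀ i, l i ∈ R) →
    l 0 = ∑ i, l i * (starRingEnd ℂ) (l i) →
    ∀ i, i ≠ 0 → l i = 0

/-- if `R` is a subring of `ℂ` closed under complex conjugation (containing 1)
which has essentially unique partitions of the unit, then `R` is kind. -/
theorem kind_of_essentially_unique_partitions (R : Subring ℂ)
    (hconj : ∀ z ∈ R, (starRingEnd ℂ) z ∈ R)
    (hpart : ∀ (m : ℕ) (μ : Fin m → ℂ), (∀ j, μ j ∈ R) →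
      (∑ j, μ j * (starRingEnd ℂ) (μ j)) = 1 →
      ∀ j k, μ j ≠ 0 → μ k ≠ 0 → j = k) :
    IsKind R := by
  intro n l hl hsum i hi
  by_contra hne
  have hconj0 : (starRingEnd ℂ) (l 0) = l 0 := by
    rw [hsum, map_sum]
    refine Finset.sum_congr rfl fun k _ => ?_
    simp [mul_comm]
  -- second block of the partition
  let l' : Fin (n + 1) → ℂ := fun j => if j = 0 then 1 - l 0 else l j
  let μ : Fin ((n + 1) + (n + 1)) → ℂ := Fin.append l l'
  have hμmem : ∀ j, μ j ∈ R := by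
    intro j
    refine Fin.addCases (fun j => ?_) (fun j => ?_) j
    · show Fin.append l l' _ ∈ R
      rw [Fin.append_left]; exact hl j
    · show Fin.append l l' _ ∈ R
      rw [Fin.append_right]
      by_cases h : j = 0
      · simpa [l', h] using sub_mem R.one_mem (hl 0)
      · simpa [l', h] using hl j
  have hT : ∑ k : Fin n, l k.succ * (starRingEnd ℂ) (l k.succ) = l 0 - l 0 * l 0 := by
    have h1 : l 0 = l 0 * (starRingEnd ℂ) (l 0) +
        ∑ k : Fin n, l k.succ * (starRingEnd ℂ) (l k.succ) := by
      have h := hsum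
      rwa [Fin.sum_univ_succ] at h
    rw [hconj0] at h1
    linear_combination -h1
  have hsum1 : (∑ j, μ j * (starRingEnd ℂ) (μ j)) = 1 := by
    show (∑ j, Fin.append l l' j * (starRingEnd ℂ) (Fin.append l l' j)) = 1
    rw [Fin.sum_univ_add]
    simp only [Fin.append_left, Fin.append_right]
    have hB : ∑ j : Fin (n + 1), l' j * (starRingEnd ℂ) (l' j) =
        (1 - l 0) * (1 - l 0) + (l 0 - l 0 * l 0) := by
      rw [Fin.sum_univ_succ]
      have h0 : l' 0 * (starRingEnd ℂ) (l' 0) = (1 - l 0) * (1 - l 0) := by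
        simp [l', map_sub, hconj0]
      have hrest : ∑ k : Fin n, l' k.succ * (starRingEnd ℂ) (l' k.succ) =
          ∑ k : Fin n, l k.succ * (starRingEnd ℂ) (l k.succ) := by
        refine Finset.sum_congr rfl fun k _ => ?_
        simp [l', Fin.succ_ne_zero]
      rw [h0, hrest, hT]
    rw [← hsum, hB]; ring
  have key := hpart _ μ hμmem hsum1 (Fin.castAdd (n + 1) i) (Fin.natAdd (n + 1) i)
    (by show Fin.append l l' _ ≠ 0; rw [Fin.append_left]; exact hne)
    (by show Fin.append l l' _ ≠ 0; rw [Fin.append_right]; simpa [l', hi] using hne)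
  have hv := Fin.val_eq_of_eq key
  simp only [Fin.coe_castAdd, Fin.coe_natAdd] at hv
  omega
end

section
/- Let R be a kind subring of ℂ that is closed under complex conjugation and contains 1. If λ₀, λ₁, …, λₙ ∈ R satisfy conj(λ₀) + Σᵢ₌₀ⁿ |λᵢ|² = 0 (equivalently, 1 + λ₀ + conj(λ₀) + Σᵢ₌₀ⁿ |λᵢ|² = 1 + λ₀) and at least one of λ₀, λ₁, …, λₙ is nonzero, then λ₀ = −1 and λ₁ = ⋯ = λₙ = 0. -/
/-- in a kind subring of `ℂ` closed under conjugation, if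
`conj(λ₀) + ∑ᵢ₌₀ⁿ |λᵢ|² = 0` and some `λᵢ` is nonzero, then `λ₀ = −1` and
`λ₁ = ⋯ = λₙ = 0`. -/
theorem kind_partition_eq_neg_one (R : Subring ℂ)
    (hconj : ∀ z ∈ R, (starRingEnd ℂ) z ∈ R) (hkind : IsKind R)
    (n : ℕ) (l : Fin (n + 1) → ℂ) (hmem : ∀ i, l i ∈ R)
    (h : (starRingEnd ℂ) (l 0) + ∑ i, l i * (starRingEnd ℂ) (l i) = 0)
    (hne : ∃ i, l i ≠ 0) :
    l 0 = -1 ∧ ∀ i, i ≠ 0 → l i = 0 := by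
  classical
  set c := starRingEnd ℂ with hc
  set μ : Fin (n+1) → ℂ := fun i => if i = 0 then 1 + l 0 else l i with hμ
  have hμmem : ∀ i, μ i ∈ R := by
    intro i
    simp only [hμ]
    split
    · exact R.add_mem R.one_mem (hmem 0)
    · exact hmem i
  have h' := h
  rw [Fin.sum_univ_succ] at h'
  have hsum : μ 0 = ∑ i, μ i * c (μ i) := by
    rw [Fin.sum_univ_succ]
    have hrest : ∑ i : Fin n, μ i.succ * c (μ i.succ)
        = ∑ i : Fin n, l i.succ * c (l i.succ) := by
      apply Finset.sum_congr rfl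
      intro i _
      simp only [hμ, if_neg (Fin.succ_ne_zero i)]
    rw [hrest]
    have hμ0 : μ 0 = 1 + l 0 := by simp [hμ]
    rw [hμ0]
    have hcmap : c (1 + l 0) = 1 + c (l 0) := by rw [map_add, map_one]
    rw [hcmap]
    linear_combination -h'
  have hz : ∀ i, i ≠ 0 → l i = 0 := by
    intro i hi
    have := hkind n μ hμmem hsum i hi
    simpa only [hμ, if_neg hi] using this
  have hl0 : l 0 ≠ 0 := by
    obtain ⟨i, hi⟩ := hne
    by_cases h0 : i = 0
    · rwa [h0] at hi
    · exact absurd (hz i h0) hi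
  have hzero : ∀ i : Fin n, l i.succ * c (l i.succ) = 0 := by
    intro i
    rw [hz i.succ (Fin.succ_ne_zero i)]; simp
  rw [Finset.sum_congr rfl (fun i _ => hzero i), Finset.sum_const_zero] at h'
  -- h' : c (l 0) + l 0 * c (l 0) = 0
  have hfac : c (l 0) * (1 + l 0) = 0 := by linear_combination h'
  have hc0 : c (l 0) ≠ 0 := by
    simpa [hc] using hl0
  have : 1 + l 0 = 0 := by
    rcases mul_eq_zero.mp hfac with h1 | h1
    · exact absurd h1 hc0
    · exact h1
  constructor
  · linear_combination this
  · exact hz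
end

section
/- Let R be a kind subring of ℂ that is closed under complex conjugation and contains 1, let n ∈ ℕ, and let p ∈ Mₙ(R) be a projection, i.e., p equals its conjugate transpose and p² = p. Then p is a diagonal matrix and every diagonal entry of p is 0 or 1. -/
/-- every projection in `Mₙ(R)` over a kind subring `R` of `ℂ` (closed under
conjugation, containing 1) is diagonal with diagonal entries `0` or `1`. -/
theorem matrix_projection_isDiag (R : Subring ℂ)
    (hconj : ∀ z ∈ R, (starRingEnd ℂ) z ∈ R) (hkind : IsKind R)
    (n : ℕ) (p : Matrix (Fin n) (Fin n) ℂ)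
    (hmem : ∀ i j, p i j ∈ R)
    (hstar : p.conjTranspose = p) (hidem : p * p = p) :
    p.IsDiag ∧ ∀ i, p i i = 0 ∨ p i i = 1 := by
  have hconjentry : ∀ i k, (starRingEnd ℂ) (p i k) = p k i := by
    intro i k
    have := congrFun (congrFun hstar k) i
    simpa [Matrix.conjTranspose_apply] using this
  have hdiag : ∀ i, p i i = ∑ k, p i k * (starRingEnd ℂ) (p i k) := by
    intro i
    have := congrFun (congrFun hidem i) i
    rw [Matrix.mul_apply] at this
    rw [← this]
    exact Finset.sum_congr rfl fun k _ => by rw [hconjentry]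
  have hoff : ∀ i k, k ≠ i → p i k = 0 := by
    intro i k hki
    obtain ⟨m, rfl⟩ : ∃ m, n = m + 1 := ⟨n - 1, (Nat.succ_pred_eq_of_pos i.pos).symm⟩
    set e := Equiv.swap (0 : Fin (m + 1)) i with he
    set l : Fin (m + 1) → ℂ := fun j => p i (e j) with hl
    have hmem' : ∀ j, l j ∈ R := fun j => hmem _ _
    have heq : l 0 = ∑ j, l j * (starRingEnd ℂ) (l j) := by
      have h1 : l 0 = p i i := by simp [hl, he]
      rw [h1, hdiag i]
      exact (Fintype.sum_equiv e _ _ fun j => rfl).symm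
    have hz := hkind m l hmem' heq (e k)
    have hek : e k ≠ 0 := by
      intro h
      apply hki
      have : e (e k) = e 0 := by rw [h]
      simpa [he] using this
    have := hz hek
    simpa [hl, he] using this
  constructor
  · intro i j hij
    exact hoff i j (Ne.symm hij)
  · intro i
    have h : p i i = p i i * p i i := by
      have := congrFun (congrFun hidem i) i
      rw [Matrix.mul_apply] at this
      exact this.symm.trans (Finset.sum_eq_single i
        (fun b _ hb => by rw [hoff i b hb, zero_mul])
        (fun h => absurd (Finset.mem_univ i) h))
    have : p i i * (p i i - 1) = 0 := by ring_nf; linear_combination -h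
    rcases mul_eq_zero.mp this with h0 | h1
    · exact Or.inl h0
    · exact Or.inr (sub_eq_zero.mp h1)
end

section
/- Let R be a kind subring of ℂ that is closed under complex conjugation and contains 1, and let φ : Mₘ(R) → Mₙ(R) be an R-algebra homomorphism that is star-preserving, i.e., φ(a*) = φ(a)* where * denotes the conjugate-transpose involution. Then φ maps every diagonal matrix in Mₘ(R) to a diagonal matrix in Mₙ(R). -/
set_option synthInstance.maxHeartbeats 1000000
set_option maxHeartbeats 1000000

lemma diag_of_selfadj_idem {R : Subring ℂ} (hkind : IsKind R) {N : ℕ} (c : R →+* R)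
    (hc : ∀ x : R, (c x : ℂ) = (starRingEnd ℂ) (x : ℂ))
    (p : Matrix (Fin (N + 1)) (Fin (N + 1)) R) (hp2 : p * p = p)
    (hps : (p.map c).transpose = p) : p.IsDiag := by
  intro j i hji
  set e := Equiv.swap (0 : Fin (N + 1)) i with he
  have hsym : ∀ a b, c (p b a) = p a b := fun a b => congrFun (congrFun hps a) b
  have h1 : p i i = ∑ k, c (p k i) * p k i := by
    have h2 : (p * p) i i = p i i := congrFun (congrFun hp2 i) i
    rw [Matrix.mul_apply] at h2
    rw [← h2]
    exact Finset.sum_congr rfl fun k _ => by rw [hsym i k]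
  have key := hkind N (fun k => ((p (e k) i : ℂ))) (fun k => (p (e k) i).2) ?_ 
  · have h0 : e.symm j ≠ 0 := by
      intro h
      apply hji
      have := congrArg e h
      simpa [he] using this
    have h3 := key (e.symm j) h0
    simp only [Equiv.apply_symm_apply] at h3
    exact Subtype.ext (by simpa using h3)
  · have he0 : e 0 = i := Equiv.swap_apply_left 0 i
    simp only [he0]
    have : ∑ k, ((p (e k) i : ℂ)) * (starRingEnd ℂ) ((p (e k) i : ℂ))
        = ∑ k, ((p k i : ℂ)) * (starRingEnd ℂ) ((p k i : ℂ)) :=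
      Equiv.sum_comp e (fun k => ((p k i : ℂ)) * (starRingEnd ℂ) ((p k i : ℂ)))
    rw [this]
    have h4 := congrArg (fun x : R => (x : ℂ)) h1
    push_cast at h4
    rw [h4]
    exact Finset.sum_congr rfl fun k _ => by rw [hc]; ring

/-- a star-preserving `R`-algebra homomorphism `φ : Mₘ(R) → Mₙ(R)` over a
kind subring `R` of `ℂ` maps diagonal matrices to diagonal matrices. Here `c` is the
restriction of complex conjugation to `R`, and the conjugate transpose of `a` is
`(a.map c)ᵀ`. -/
theorem star_hom_maps_diagonal_to_diagonal (R : Subring ℂ)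
    (hconj : ∀ z ∈ R, (starRingEnd ℂ) z ∈ R) (hkind : IsKind R)
    (m n : ℕ) (c : R →+* R) (hc : ∀ x : R, (c x : ℂ) = (starRingEnd ℂ) (x : ℂ))
    (φ : Matrix (Fin m) (Fin m) R →ₐ[R] Matrix (Fin n) (Fin n) R)
    (hφstar : ∀ a : Matrix (Fin m) (Fin m) R,
      φ ((a.map c).transpose) = ((φ a).map c).transpose) :
    ∀ d : Matrix (Fin m) (Fin m) R, d.IsDiag → (φ d).IsDiag := by
  intro d hd
  cases n with
  | zero => exact fun {i} => i.elim0
  | succ N =>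
    -- each φ(E_ii) is diagonal
    have hE : ∀ i : Fin m, (φ (Matrix.single i i 1)).IsDiag := by
      intro i
      apply diag_of_selfadj_idem hkind c hc
      · rw [← map_mul, Matrix.single_mul_single_same, one_mul]
      · rw [← hφstar]
        congr 1
        ext a b
        simp only [Matrix.transpose_apply, Matrix.map_apply, Matrix.single,
          Matrix.of_apply]
        rcases eq_or_ne i a with rfl | h1 <;> rcases eq_or_ne i b with rfl | h2 <;>
          simp_all [map_one, map_zero]
    have hdsum : d = ∑ i : Fin m, (d i i) • Matrix.single i i (1 : R) := by
      refine Matrix.ext fun a b => ?_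
      rw [Matrix.sum_apply]
      by_cases hab : a = b
      · subst hab
        rw [Finset.sum_eq_single a]
        · simp [Matrix.single]
        · intro k _ hk; simp [Matrix.single, hk, Ne.symm hk]
        · simp
      · rw [hd hab]
        symm
        apply Finset.sum_eq_zero
        intro k _
        simp only [Matrix.smul_apply, Matrix.single, Matrix.of_apply]
        rcases eq_or_ne k a with rfl | hka
        · simp [hab]
        · simp [hka]
    rw [hdsum, map_sum]
    intro a b hab
    rw [Matrix.sum_apply]
    refine Finset.sum_eq_zero fun k _ => ?_
    rw [map_smul]
    simp only [Matrix.smul_apply]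
    rw [hE k hab, smul_zero]
end

section
/- Let R be a kind subring of ℂ that is closed under complex conjugation and contains 1, and equip the Laurent polynomial ring R[x, x⁻¹] with the involution determined by (Σᵢ aᵢ xⁱ)* = Σᵢ conj(aᵢ) x⁻ⁱ. If p ∈ R[x, x⁻¹] satisfies p* = p and p² = p, then p = 0 or p = 1. -/
open LaurentPolynomial ComplexConjugate

theorem IsKind.eq_zero_of_eq_sum_mul_conj {R : Subring ℂ} (hR : IsKind R) {ι : Type*}
    {s : Finset ι} {f : ι → ℂ} (hf : ∀ i ∈ s, f i ∈ R) {i₀ : ι} (hi₀ : i₀ ∈ s)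
    (h : f i₀ = ∑ i ∈ s, f i * conj (f i)) : ∀ i ∈ s, i ≠ i₀ → f i = 0 := by
  classical
  set t := s.erase i₀
  let e := t.equivFin
  let l : Fin (t.card + 1) → ℂ := Fin.cons (f i₀) fun j ↦ f (e.symm j)
  have hl : ∀ j, l j ∈ R :=
    Fin.cases (hf i₀ hi₀) fun j ↦ hf _ (Finset.mem_of_mem_erase (e.symm j).2)
  have hsum : l 0 = ∑ j, l j * conj (l j) := by
    rw [Fin.sum_univ_succ]
    simp only [l, Fin.cons_zero, Fin.cons_succ]
    rw [e.symm.sum_comp (fun i : t ↦ f i * conj (f i)),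
      Finset.sum_coe_sort t (fun i ↦ f i * conj (f i))]
    exact h.trans (Finset.add_sum_erase s _ hi₀).symm
  intro i hi hne
  simpa [l] using hR _ l hl hsum (e ⟨i, Finset.mem_erase.mpr ⟨hne, hi⟩⟩).succ (Fin.succ_ne_zero _)

namespace LaurentPolynomial

variable {R : Type*} [Semiring R]

theorem coeff_mul_zero_eq_sum (p q : R[T;T⁻¹]) {s : Finset ℤ} (hs : p.coeff.support ⊆ s) :
    (p * q).coeff 0 = ∑ i ∈ s, p.coeff i * q.coeff (-i) := by
  rw [AddMonoidAlgebra.coeff_mul_apply_left, Finsupp.sum_of_support_subset _ hs _ (by simp)]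
  simp

theorem eq_C_of_forall_coeff_eq_zero {p : R[T;T⁻¹]} (h : ∀ i ≠ 0, p.coeff i = 0) :
    p = C (p.coeff 0) := by
  ext i
  rw [← single_eq_C, AddMonoidAlgebra.coeff_single, Finsupp.single_apply]
  split_ifs with hi
  · rw [hi]
  · exact h i (Ne.symm hi)

theorem C_injective : Function.Injective (C : R → R[T;T⁻¹]) := fun a b hab ↦ by
  simpa only [← single_eq_C, AddMonoidAlgebra.coeff_single, Finsupp.single_eq_same] using
    congrArg (fun p : R[T;T⁻¹] ↦ p.coeff 0) hab

end LaurentPolynomial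

theorem laurent_projection_trivial_general (R : Subring ℂ)
    (hkind : IsKind R)
    (c : R →+* R) (hc : ∀ x : R, (c x : ℂ) = (starRingEnd ℂ) (x : ℂ))
    (p : LaurentPolynomial R)
    (hsa : ∀ i : ℤ, c (p.coeff (-i)) = p.coeff i)
    (hidem : p * p = p) :
    p = 0 ∨ p = 1 := by
  classical
  set s := insert 0 p.coeff.support
  have hneg : ∀ i, (p.coeff (-i) : ℂ) = conj (p.coeff i : ℂ) := fun i ↦ by
    rw [← hsa (-i), neg_neg, hc]
  have hsum : (p.coeff 0 : ℂ) = ∑ i ∈ s, (p.coeff i : ℂ) * conj (p.coeff i : ℂ) := by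
    conv_lhs => rw [← hidem, coeff_mul_zero_eq_sum p p (Finset.subset_insert 0 _)]
    push_cast
    simp only [hneg, s]
  have hvanish : ∀ i ≠ 0, p.coeff i = 0 := fun i hi ↦ by
    by_cases his : i ∈ s
    · exact Subtype.ext <| hkind.eq_zero_of_eq_sum_mul_conj (fun j _ ↦ (p.coeff j).2)
        (Finset.mem_insert_self 0 _) hsum i his hi
    · exact Finsupp.notMem_support_iff.mp fun h ↦ his (Finset.mem_insert_of_mem h)
  have hp := eq_C_of_forall_coeff_eq_zero hvanish
  have hidem₀ : IsIdempotentElem (p.coeff 0) := C_injective <| by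
    rw [map_mul, ← hp, hidem]
  rcases IsIdempotentElem.iff_eq_zero_or_one.mp hidem₀ with h | h
  · exact .inl (by rw [hp, h, map_zero])
  · exact .inr (by rw [hp, h, map_one])

/-- a self-adjoint idempotent in the Laurent polynomial ring `R[x,x⁻¹]`
over a kind subring `R` of `ℂ`, with involution `(∑ aᵢ xⁱ)* = ∑ conj(aᵢ) x⁻ⁱ`, is `0`
or `1`. Here `c` is the restriction of complex conjugation to `R`, and self-adjointness
`p* = p` is expressed coefficientwise: `c(a₋ᵢ) = aᵢ` for all `i`. -/
theorem laurent_projection_trivial (R : Subring ℂ)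
    (hconj : ∀ z ∈ R, (starRingEnd ℂ) z ∈ R) (hkind : IsKind R)
    (c : R →+* R) (hc : ∀ x : R, (c x : ℂ) = (starRingEnd ℂ) (x : ℂ))
    (p : LaurentPolynomial R)
    (hsa : ∀ i : ℤ, c (p.coeff (-i)) = p.coeff i)
    (hidem : p * p = p) :
    p = 0 ∨ p = 1 :=
  laurent_projection_trivial_general R hkind c hc p hsa hidem
end
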